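/- arXiv:2510.11140 — 3 statements merged into one kernel-verified Lean document; each statement's English description precedes it below -/
import Mathlib

section
/- Let 𝒲 be a measurable space, ℙ a probability measure on 𝒲, and let w_1, w_2, … be an i.i.d. sequence with common law ℙ. Let h_a, h_b : 𝒲 × 𝒲 → ℝ be symmetric measurable functions with |h_a| ≤ M and |h_b| ≤ M for some constant M. Define the rescaled covariance-estimator entry σ̂_n = n² (n choose 2)^{-2} ∑_{1 ≤ i < j ≤ n} h_a(w_i, w_j) h_b(w_i, w_j). Then, as n → ∞, σ̂_n converges in probability to 2·E[h_a(w_1, w_2) h_b(w_1, w_2)], where w_1, w_2 are i.i.d. with law ℙ. (Lemma 3: the estimated covariance matrix Σ̂_{H0} built from these entries converges in probability to the true covariance matrix Σ_{H0} of the rescaled degenerate U-statistics.) -/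
open MeasureTheory Filter ProbabilityTheory

set_option maxHeartbeats 2000000 in
/-- Consistency of the rescaled covariance-estimator entry: for an i.i.d. sequence
`w_1, w_2, …` with law `P` and bounded symmetric measurable `h_a, h_b`, the statistic
`σ̂_n = n² (n choose 2)⁻² ∑_{i<j} h_a(w_i,w_j) h_b(w_i,w_j)` converges in probability to
`2 E[h_a(w_1,w_2) h_b(w_1,w_2)]`. -/
theorem covariance_estimator_consistent
    {Ω 𝒲 : Type*} [MeasurableSpace Ω] [MeasurableSpace 𝒲]
    (μ : Measure Ω) [IsProbabilityMeasure μ]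
    (P : Measure 𝒲) [IsProbabilityMeasure P]
    (w : ℕ → Ω → 𝒲) (hwmeas : ∀ i, Measurable (w i))
    (hindep : iIndepFun w μ)
    (hlaw : ∀ i, Measure.map (w i) μ = P)
    (ha hb : 𝒲 → 𝒲 → ℝ)
    (hameas : Measurable (Function.uncurry ha))
    (hbmeas : Measurable (Function.uncurry hb))
    (hasymm : ∀ x y, ha x y = ha y x) (hbsymm : ∀ x y, hb x y = hb y x)
    (M : ℝ) (habd : ∀ x y, |ha x y| ≤ M) (hbbd : ∀ x y, |hb x y| ≤ M) :
    ∀ ε > 0, Tendsto (fun n : ℕ => μ {ω | ε <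
        |(n : ℝ) ^ 2 * ((n.choose 2 : ℝ)⁻¹) ^ 2 *
            (∑ i ∈ Finset.range n, ∑ j ∈ Finset.range n,
              if i < j then ha (w i ω) (w j ω) * hb (w i ω) (w j ω) else 0)
          - 2 * ∫ z : 𝒲 × 𝒲, ha z.1 z.2 * hb z.1 z.2 ∂(P.prod P)|})
      atTop (nhds 0) := by
  classical
  intro ε hε
  -- nonemptiness of 𝒲 and nonnegativity of M
  have hW : Nonempty 𝒲 := by
    by_contra h
    rw [not_nonempty_iff] at h
    have h1 : P Set.univ = 1 := measure_univ
    rw [Set.univ_eq_empty_iff.mpr h] at h1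
    simp at h1
  obtain ⟨x0⟩ := hW
  have hM0 : 0 ≤ M := le_trans (abs_nonneg _) (habd x0 x0)
  set g : 𝒲 × 𝒲 → ℝ := fun z => ha z.1 z.2 * hb z.1 z.2 with hgdef
  have hgmeas : Measurable g := hameas.mul hbmeas
  set K : ℝ := M ^ 2 with hKdef
  have hK0 : 0 ≤ K := sq_nonneg M
  have hgbd : ∀ z, |g z| ≤ K := by
    intro z
    calc |g z| = |ha z.1 z.2| * |hb z.1 z.2| := abs_mul _ _
    _ ≤ M * M := mul_le_mul (habd _ _) (hbbd _ _) (abs_nonneg _) hM0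
    _ = K := (sq M).symm
  set m : ℝ := ∫ z, g z ∂(P.prod P) with hmdef
  have hm_bd : |m| ≤ K := by
    have := norm_integral_le_of_norm_le_const (μ := P.prod P) (f := g) (C := K)
      (ae_of_all _ fun z => by simpa using hgbd z)
    simpa using this
  -- law of pairs
  have hpairlaw : ∀ i j : ℕ, i ≠ j →
      Measure.map (fun ω => (w i ω, w j ω)) μ = P.prod P := by
    intro i j hij
    have h1 : IndepFun (w i) (w j) μ := hindep.indepFun hij
    rw [(indepFun_iff_map_prod_eq_prod_map_map (hwmeas i).aemeasurable
      (hwmeas j).aemeasurable).mp h1, hlaw i, hlaw j]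
  have hXint : ∀ i j : ℕ, i ≠ j → ∫ ω, g (w i ω, w j ω) ∂μ = m := by
    intro i j hij
    have hmeas : Measurable fun ω => (w i ω, w j ω) := (hwmeas i).prodMk (hwmeas j)
    rw [hmdef, ← hpairlaw i j hij,
      integral_map hmeas.aemeasurable hgmeas.aestronglyMeasurable]
  -- the centered summands
  set Y : ℕ × ℕ → Ω → ℝ :=
    fun p => if p.1 < p.2 then (fun ω => g (w p.1 ω, w p.2 ω) - m) else 0 with hYdef
  have hYmeas : ∀ p, Measurable (Y p) := by
    intro p; rw [hYdef]; dsimp only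
    split
    · exact (hgmeas.comp ((hwmeas _).prodMk (hwmeas _))).sub measurable_const
    · exact measurable_const
  have hYbd : ∀ p ω, |Y p ω| ≤ 2 * K := by
    intro p ω; rw [hYdef]; dsimp only; split
    · calc |g (w p.1 ω, w p.2 ω) - m| ≤ |g (w p.1 ω, w p.2 ω)| + |m| := abs_sub _ _
      _ ≤ K + K := add_le_add (hgbd _) hm_bd
      _ = 2 * K := by ring
    · simp [hK0]
  have hYint : ∀ p, Integrable (Y p) μ := fun p =>
    ⟨(hYmeas p).aestronglyMeasurable, HasFiniteIntegral.of_bounded (C := 2*K)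
      (ae_of_all _ fun ω => by simpa using hYbd p ω)⟩
  have hYmul_int : ∀ p q, Integrable (fun ω => Y p ω * Y q ω) μ := fun p q =>
    ⟨((hYmeas p).mul (hYmeas q)).aestronglyMeasurable,
     HasFiniteIntegral.of_bounded (C := (2*K)*(2*K)) (ae_of_all _ fun ω => by
       rw [Real.norm_eq_abs, abs_mul]
       exact mul_le_mul (hYbd p ω) (hYbd q ω) (abs_nonneg _) (by positivity))⟩
  have hYzero : ∀ p : ℕ × ℕ, ∫ ω, Y p ω ∂μ = 0 := by
    intro p
    rw [hYdef]; dsimp only; split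
    · rename_i h
      have hint : Integrable (fun ω => g (w p.1 ω, w p.2 ω)) μ :=
        ⟨(hgmeas.comp ((hwmeas _).prodMk (hwmeas _))).aestronglyMeasurable,
         HasFiniteIntegral.of_bounded (C := K) (ae_of_all _ fun ω => by simpa using hgbd _)⟩
      rw [integral_sub hint (integrable_const m), hXint p.1 p.2 (Nat.ne_of_lt h)]
      simp
    · simp
  -- vanishing covariance for disjoint index pairs
  have hcov0 : ∀ p q : ℕ × ℕ, p.1 ≠ q.1 → p.1 ≠ q.2 → p.2 ≠ q.1 → p.2 ≠ q.2 →
      ∫ ω, Y p ω * Y q ω ∂μ = 0 := by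
    intro p q h1 h2 h3 h4
    by_cases hp : p.1 < p.2
    · by_cases hq : q.1 < q.2
      · have base := hindep.indepFun_prodMk_prodMk hwmeas p.1 p.2 q.1 q.2 h1 h2 h3 h4
        have hφ : Measurable (fun z : 𝒲 × 𝒲 => g z - m) := hgmeas.sub measurable_const
        have hind : IndepFun (Y p) (Y q) μ := by
          have hcomp := base.comp hφ hφ
          have e1 : Y p = (fun z : 𝒲 × 𝒲 => g z - m) ∘ (fun ω => (w p.1 ω, w p.2 ω)) := by
            rw [hYdef]; dsimp only; rw [if_pos hp]; rfl
          have e2 : Y q = (fun z : 𝒲 × 𝒲 => g z - m) ∘ (fun ω => (w q.1 ω, w q.2 ω)) := by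
            rw [hYdef]; dsimp only; rw [if_pos hq]; rfl
          rw [e1, e2]; exact hcomp
        rw [show (fun ω => Y p ω * Y q ω) = Y p * Y q from rfl,
          hind.integral_mul_eq_mul_integral (hYint p).aestronglyMeasurable (hYint q).aestronglyMeasurable, hYzero, hYzero, mul_zero]
      · have : Y q = 0 := by rw [hYdef]; dsimp only; rw [if_neg hq]
        simp [this]
    · have : Y p = 0 := by rw [hYdef]; dsimp only; rw [if_neg hp]
      simp [this]
  -- uniform covariance bound
  have hcovbd : ∀ p q : ℕ × ℕ, |∫ ω, Y p ω * Y q ω ∂μ| ≤ 4 * K ^ 2 := by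
    intro p q
    have hbd : ∀ ω, ‖Y p ω * Y q ω‖ ≤ 4 * K ^ 2 := by
      intro ω
      rw [Real.norm_eq_abs, abs_mul]
      calc |Y p ω| * |Y q ω| ≤ (2*K)*(2*K) :=
        mul_le_mul (hYbd p ω) (hYbd q ω) (abs_nonneg _) (by positivity)
      _ = 4 * K ^ 2 := by ring
    have := norm_integral_le_of_norm_le_const (μ := μ)
      (f := fun ω => Y p ω * Y q ω) (C := 4 * K ^ 2) (ae_of_all _ hbd)
    simpa using this
  -- second moment of the centered sum
  set T : ℕ → ℝ := fun n =>
    ∫ ω, (∑ p ∈ Finset.range n ×ˢ Finset.range n, Y p ω) ^ 2 ∂μ with hTdef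
  have hT0 : ∀ n, 0 ≤ T n := fun n => integral_nonneg fun ω => sq_nonneg _
  have hTbd : ∀ n : ℕ, T n ≤ 16 * K ^ 2 * (n : ℝ) ^ 3 := by
    intro n
    set Pn := Finset.range n ×ˢ Finset.range n with hPn
    have hexp : T n = ∑ p ∈ Pn, ∑ q ∈ Pn, ∫ ω, Y p ω * Y q ω ∂μ := by
      rw [hTdef]; dsimp only
      have hpt : ∀ ω, (∑ p ∈ Pn, Y p ω) ^ 2 = ∑ p ∈ Pn, ∑ q ∈ Pn, Y p ω * Y q ω := by
        intro ω; rw [sq, Finset.sum_mul_sum]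
      rw [integral_congr_ae (ae_of_all _ hpt)]
      rw [integral_finset_sum _
        (fun p _ => integrable_finset_sum _ (fun q _ => hYmul_int p q))]
      exact Finset.sum_congr rfl fun p _ => integral_finset_sum _ (fun q _ => hYmul_int p q)
    rw [hexp]
    have hterm : ∀ p ∈ Pn, (∑ q ∈ Pn, ∫ ω, Y p ω * Y q ω ∂μ) ≤ 16 * K ^ 2 * n := by
      intro p _
      have hstep : (∑ q ∈ Pn, ∫ ω, Y p ω * Y q ω ∂μ) ≤
          ∑ q ∈ Pn, (if p.1 = q.1 ∨ p.1 = q.2 ∨ p.2 = q.1 ∨ p.2 = q.2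
            then 4 * K ^ 2 else 0) := by
        apply Finset.sum_le_sum
        intro q _
        by_cases hbq : p.1 = q.1 ∨ p.1 = q.2 ∨ p.2 = q.1 ∨ p.2 = q.2
        · rw [if_pos hbq]; exact le_trans (le_abs_self _) (hcovbd p q)
        · push_neg at hbq
          rw [if_neg (by push_neg; exact hbq),
            hcov0 p q hbq.1 hbq.2.1 hbq.2.2.1 hbq.2.2.2]
      refine hstep.trans ?_
      rw [Finset.sum_ite, Finset.sum_const_zero, add_zero, Finset.sum_const, nsmul_eq_mul]
      have hcard : ((Pn.filter (fun q => p.1 = q.1 ∨ p.1 = q.2 ∨ p.2 = q.1 ∨ p.2 = q.2)).card : ℝ)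
          ≤ 4 * n := by
        have hsub : Pn.filter (fun q => p.1 = q.1 ∨ p.1 = q.2 ∨ p.2 = q.1 ∨ p.2 = q.2) ⊆
            (({p.1} ×ˢ Finset.range n) ∪ (Finset.range n ×ˢ {p.1})) ∪
            (({p.2} ×ˢ Finset.range n) ∪ (Finset.range n ×ˢ {p.2})) := by
          intro q hq
          simp only [Finset.mem_filter, hPn, Finset.mem_product, Finset.mem_range,
            Finset.mem_union, Finset.mem_singleton] at *
          rcases hq.1 with ⟨hq1, hq2⟩
          rcases hq.2 with h|h|h|h
          · exact Or.inl (Or.inl ⟨h.symm, hq2⟩)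
          · exact Or.inl (Or.inr ⟨hq1, h.symm⟩)
          · exact Or.inr (Or.inl ⟨h.symm, hq2⟩)
          · exact Or.inr (Or.inr ⟨hq1, h.symm⟩)
        have hc1 := Finset.card_le_card hsub
        have hc2 := Finset.card_union_le (({p.1} ×ˢ Finset.range n) ∪ (Finset.range n ×ˢ {p.1}))
          (({p.2} ×ˢ Finset.range n) ∪ (Finset.range n ×ˢ {p.2}))
        have hc3 := Finset.card_union_le ({p.1} ×ˢ Finset.range n) (Finset.range n ×ˢ {p.1})
        have hc4 := Finset.card_union_le ({p.2} ×ˢ Finset.range n) (Finset.range n ×ˢ {p.2})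
        simp only [Finset.card_product, Finset.card_singleton, Finset.card_range,
          one_mul, mul_one] at hc1 hc2 hc3 hc4
        have : (Pn.filter (fun q => p.1 = q.1 ∨ p.1 = q.2 ∨ p.2 = q.1 ∨ p.2 = q.2)).card
            ≤ 4 * n := by omega
        exact_mod_cast this
      calc ((Pn.filter (fun q => p.1 = q.1 ∨ p.1 = q.2 ∨ p.2 = q.1 ∨ p.2 = q.2)).card : ℝ)
            * (4 * K ^ 2) ≤ (4 * n) * (4 * K ^ 2) := by
            apply mul_le_mul_of_nonneg_right hcard (by positivity)
        _ = 16 * K ^ 2 * n := by ring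
    calc (∑ p ∈ Pn, ∑ q ∈ Pn, ∫ ω, Y p ω * Y q ω ∂μ) ≤ ∑ _p ∈ Pn, 16 * K ^ 2 * (n : ℝ) :=
          Finset.sum_le_sum hterm
      _ = (Pn.card : ℝ) * (16 * K ^ 2 * n) := by rw [Finset.sum_const, nsmul_eq_mul]
      _ = 16 * K ^ 2 * (n : ℝ) ^ 3 := by
          rw [hPn, Finset.card_product, Finset.card_range]
          push_cast; ring
  -- counting: number of pairs i < j in range n is n choose 2
  have hcount : ∀ n : ℕ,
      (∑ i ∈ Finset.range n, ∑ j ∈ Finset.range n, if i < j then m else 0)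
        = (n.choose 2 : ℝ) * m := by
    intro n
    rw [Finset.sum_comm]
    have h1 : ∀ j ∈ Finset.range n,
        (∑ i ∈ Finset.range n, if i < j then m else 0) = (j : ℝ) * m := by
      intro j hj
      rw [Finset.sum_ite, Finset.sum_const_zero, add_zero, Finset.sum_const, nsmul_eq_mul]
      congr 2
      have he : Finset.filter (fun i => i < j) (Finset.range n) = Finset.range j := by
        ext i
        simp only [Finset.mem_filter, Finset.mem_range]
        constructor
        · exact fun h => h.2
        · exact fun h => ⟨h.trans (Finset.mem_range.mp hj), h⟩
      rw [he, Finset.card_range]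
    rw [Finset.sum_congr rfl h1, ← Finset.sum_mul]
    congr 1
    have h2 : (∑ j ∈ Finset.range n, j) = n.choose 2 := by
      have := Finset.sum_range_id_mul_two n
      rw [Nat.choose_two_right]
      omega
    rw [← Nat.cast_sum, h2]
  -- decomposition of the statistic
  have hstmt : ∀ (n : ℕ) (ω : Ω),
      (∑ i ∈ Finset.range n, ∑ j ∈ Finset.range n,
        if i < j then ha (w i ω) (w j ω) * hb (w i ω) (w j ω) else 0)
      = (∑ p ∈ Finset.range n ×ˢ Finset.range n, Y p ω) + (n.choose 2 : ℝ) * m := by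
    intro n ω
    have h1 : ∀ i j : ℕ,
        (if i < j then ha (w i ω) (w j ω) * hb (w i ω) (w j ω) else 0)
        = Y (i, j) ω + (if i < j then m else 0) := by
      intro i j
      rw [hYdef]; dsimp only
      by_cases h : i < j
      · rw [if_pos h, if_pos h, if_pos h]; rw [hgdef]; ring
      · rw [if_neg h, if_neg h, if_neg h]; simp
    calc (∑ i ∈ Finset.range n, ∑ j ∈ Finset.range n,
          if i < j then ha (w i ω) (w j ω) * hb (w i ω) (w j ω) else 0)
        = ∑ i ∈ Finset.range n, ∑ j ∈ Finset.range n,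
            (Y (i, j) ω + (if i < j then m else 0)) := by
          exact Finset.sum_congr rfl fun i _ => Finset.sum_congr rfl fun j _ => h1 i j
      _ = (∑ i ∈ Finset.range n, ∑ j ∈ Finset.range n, Y (i, j) ω)
          + (∑ i ∈ Finset.range n, ∑ j ∈ Finset.range n, if i < j then m else 0) := by
          rw [← Finset.sum_add_distrib]
          exact Finset.sum_congr rfl fun i _ => Finset.sum_add_distrib
      _ = (∑ p ∈ Finset.range n ×ˢ Finset.range n, Y p ω) + (n.choose 2 : ℝ) * m := by
          rw [hcount n, Finset.sum_product]
  set c : ℕ → ℝ := fun n => (n : ℝ) ^ 2 * ((n.choose 2 : ℝ)⁻¹) ^ 2 with hcdef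
  set d : ℕ → ℝ := fun n => c n * (n.choose 2 : ℝ) * m - 2 * m with hddef
  -- Markov/Chebyshev bound for each n
  have hmark : ∀ n : ℕ, μ {ω | ε <
      |(n : ℝ) ^ 2 * ((n.choose 2 : ℝ)⁻¹) ^ 2 *
          (∑ i ∈ Finset.range n, ∑ j ∈ Finset.range n,
            if i < j then ha (w i ω) (w j ω) * hb (w i ω) (w j ω) else 0) - 2 * m|}
      ≤ ENNReal.ofReal ((2 * (c n) ^ 2 * T n + 2 * (d n) ^ 2) / ε ^ 2) := by
    intro n
    set SY : Ω → ℝ := fun ω => ∑ p ∈ Finset.range n ×ˢ Finset.range n, Y p ω with hSY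
    have hSYm : Measurable SY := Finset.measurable_sum _ fun p _ => hYmeas p
    have hSYb : ∀ ω, |SY ω| ≤ ((n * n : ℕ) : ℝ) * (2 * K) := by
      intro ω
      calc |SY ω| ≤ ∑ p ∈ Finset.range n ×ˢ Finset.range n, |Y p ω| :=
            Finset.abs_sum_le_sum_abs _ _
        _ ≤ ∑ _p ∈ Finset.range n ×ˢ Finset.range n, 2 * K :=
            Finset.sum_le_sum fun p _ => hYbd p ω
        _ = ((n * n : ℕ) : ℝ) * (2 * K) := by
            rw [Finset.sum_const, nsmul_eq_mul, Finset.card_product, Finset.card_range]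
    have hZbd : ∀ ω, |c n * SY ω + d n| ≤ |c n| * (((n * n : ℕ) : ℝ) * (2 * K)) + |d n| := by
      intro ω
      calc |c n * SY ω + d n| ≤ |c n * SY ω| + |d n| := abs_add_le _ _
        _ ≤ |c n| * (((n * n : ℕ) : ℝ) * (2 * K)) + |d n| := by
            rw [abs_mul]
            exact add_le_add (mul_le_mul_of_nonneg_left (hSYb ω) (abs_nonneg _)) le_rfl
    have hZsq_int : Integrable (fun ω => (c n * SY ω + d n) ^ 2) μ :=
      ⟨(((hSYm.const_mul _).add_const _).pow_const 2).aestronglyMeasurable,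
       HasFiniteIntegral.of_bounded
         (C := (|c n| * (((n * n : ℕ) : ℝ) * (2 * K)) + |d n|) ^ 2)
         (ae_of_all _ fun ω => by
           rw [Real.norm_eq_abs, abs_pow]
           exact pow_le_pow_left₀ (abs_nonneg _) (hZbd ω) 2)⟩
    have hSY2_int : Integrable (fun ω => (SY ω) ^ 2) μ :=
      ⟨(hSYm.pow_const 2).aestronglyMeasurable,
       HasFiniteIntegral.of_bounded (C := (((n * n : ℕ) : ℝ) * (2 * K)) ^ 2)
         (ae_of_all _ fun ω => by
           rw [Real.norm_eq_abs, abs_pow]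
           exact pow_le_pow_left₀ (abs_nonneg _) (hSYb ω) 2)⟩
    have hint_le : ∫ ω, (c n * SY ω + d n) ^ 2 ∂μ ≤ 2 * (c n) ^ 2 * T n + 2 * (d n) ^ 2 := by
      have hrhs_int : Integrable (fun ω => 2 * (c n) ^ 2 * (SY ω) ^ 2 + 2 * (d n) ^ 2) μ :=
        (hSY2_int.const_mul _).add (integrable_const _)
      have hmono : ∫ ω, (c n * SY ω + d n) ^ 2 ∂μ
          ≤ ∫ ω, 2 * (c n) ^ 2 * (SY ω) ^ 2 + 2 * (d n) ^ 2 ∂μ :=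
        integral_mono hZsq_int hrhs_int fun ω => by nlinarith [sq_nonneg (c n * SY ω - d n)]
      refine hmono.trans (le_of_eq ?_)
      rw [integral_add (hSY2_int.const_mul _) (integrable_const _), integral_const_mul _ _,
        integral_const, probReal_univ, smul_eq_mul, one_mul]
    have hmarkov := mul_meas_ge_le_integral_of_nonneg (μ := μ)
      (f := fun ω => (c n * SY ω + d n) ^ 2)
      (ae_of_all _ fun ω => sq_nonneg _) hZsq_int (ε ^ 2)
    have hsub : {ω | ε <
        |(n : ℝ) ^ 2 * ((n.choose 2 : ℝ)⁻¹) ^ 2 *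
            (∑ i ∈ Finset.range n, ∑ j ∈ Finset.range n,
              if i < j then ha (w i ω) (w j ω) * hb (w i ω) (w j ω) else 0) - 2 * m|}
        ⊆ {ω | ε ^ 2 ≤ (fun ω => (c n * SY ω + d n) ^ 2) ω} := by
      intro ω hω
      simp only [Set.mem_setOf_eq] at hω ⊢
      have heq : (n : ℝ) ^ 2 * ((n.choose 2 : ℝ)⁻¹) ^ 2 *
          (∑ i ∈ Finset.range n, ∑ j ∈ Finset.range n,
            if i < j then ha (w i ω) (w j ω) * hb (w i ω) (w j ω) else 0) - 2 * m
          = c n * SY ω + d n := by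
        rw [hstmt n ω, hddef, hcdef, hSY]; dsimp only; ring
      rw [heq] at hω
      calc ε ^ 2 ≤ |c n * SY ω + d n| ^ 2 := pow_le_pow_left₀ hε.le hω.le 2
        _ = (c n * SY ω + d n) ^ 2 := sq_abs _
    have htr : (μ {ω | ε ^ 2 ≤ (fun ω => (c n * SY ω + d n) ^ 2) ω}).toReal
        ≤ (2 * (c n) ^ 2 * T n + 2 * (d n) ^ 2) / ε ^ 2 := by
      rw [le_div_iff₀ (by positivity)]
      calc (μ {ω | ε ^ 2 ≤ (fun ω => (c n * SY ω + d n) ^ 2) ω}).toReal * ε ^ 2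
          = ε ^ 2 * (μ {ω | ε ^ 2 ≤ (fun ω => (c n * SY ω + d n) ^ 2) ω}).toReal := mul_comm _ _
        _ ≤ ∫ ω, (c n * SY ω + d n) ^ 2 ∂μ := hmarkov
        _ ≤ 2 * (c n) ^ 2 * T n + 2 * (d n) ^ 2 := hint_le
    calc μ {ω | ε <
        |(n : ℝ) ^ 2 * ((n.choose 2 : ℝ)⁻¹) ^ 2 *
            (∑ i ∈ Finset.range n, ∑ j ∈ Finset.range n,
              if i < j then ha (w i ω) (w j ω) * hb (w i ω) (w j ω) else 0) - 2 * m|}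
        ≤ μ {ω | ε ^ 2 ≤ (fun ω => (c n * SY ω + d n) ^ 2) ω} := measure_mono hsub
      _ = ENNReal.ofReal ((μ {ω | ε ^ 2 ≤ (fun ω => (c n * SY ω + d n) ^ 2) ω}).toReal) :=
          (ENNReal.ofReal_toReal (measure_ne_top _ _)).symm
      _ ≤ ENNReal.ofReal ((2 * (c n) ^ 2 * T n + 2 * (d n) ^ 2) / ε ^ 2) :=
          ENNReal.ofReal_le_ofReal htr
  -- deterministic bound
  set C : ℝ := 4096 * K ^ 2 + 8 * m ^ 2 with hCdef
  have hC0 : 0 ≤ C := by positivity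
  have hbound : ∀ n : ℕ, 2 ≤ n →
      (2 * (c n) ^ 2 * T n + 2 * (d n) ^ 2) / ε ^ 2 ≤ (2 * C / ε ^ 2) / n := by
    intro n hn
    have hn2 : (2 : ℝ) ≤ (n : ℝ) := by exact_mod_cast hn
    have hx1 : (1 : ℝ) ≤ (n : ℝ) - 1 := by linarith
    have hx0 : (0 : ℝ) < (n : ℝ) - 1 := by linarith
    have hn0 : (0 : ℝ) < (n : ℝ) := by linarith
    have hcval : c n = 4 / ((n : ℝ) - 1) ^ 2 := by
      rw [hcdef]; dsimp only
      rw [Nat.cast_choose_two]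
      field_simp
      ring
    have hdval : d n = 2 * m / ((n : ℝ) - 1) := by
      rw [hddef]; dsimp only
      rw [hcval, Nat.cast_choose_two]
      field_simp
      ring
    have e2 : (n : ℝ) ^ 3 ≤ 8 * ((n : ℝ) - 1) ^ 3 := by nlinarith
    have h1 : 2 * (c n) ^ 2 * T n + 2 * (d n) ^ 2 ≤ C / ((n : ℝ) - 1) := by
      rw [hcval, hdval]
      have e1 : 2 * (4 / ((n:ℝ)-1) ^ 2) ^ 2 * T n
          ≤ 2 * (4 / ((n:ℝ)-1) ^ 2) ^ 2 * (16 * K ^ 2 * (n:ℝ) ^ 3) :=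
        mul_le_mul_of_nonneg_left (hTbd n) (by positivity)
      have e3 : 2 * (4 / ((n:ℝ)-1) ^ 2) ^ 2 * (16 * K ^ 2 * (n:ℝ) ^ 3)
          ≤ 2 * (4 / ((n:ℝ)-1) ^ 2) ^ 2 * (16 * K ^ 2 * (8 * ((n:ℝ)-1) ^ 3)) := by
        apply mul_le_mul_of_nonneg_left _ (by positivity)
        apply mul_le_mul_of_nonneg_left e2 (by positivity)
      have e4 : 2 * (4 / ((n:ℝ)-1) ^ 2) ^ 2 * (16 * K ^ 2 * (8 * ((n:ℝ)-1) ^ 3))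
          = 4096 * K ^ 2 / ((n:ℝ)-1) := by field_simp; ring
      have e5 : 2 * (2 * m / ((n:ℝ)-1)) ^ 2 ≤ 8 * m ^ 2 / ((n:ℝ)-1) := by
        have e5a : 2 * (2 * m / ((n:ℝ)-1)) ^ 2 = 8 * m ^ 2 / ((n:ℝ)-1) ^ 2 := by
          field_simp; ring
        rw [e5a, div_le_div_iff₀ (by positivity) hx0]
        nlinarith [mul_nonneg (mul_nonneg (by positivity : (0:ℝ) ≤ 8 * m ^ 2)
          (sub_nonneg.mpr hx1)) hx0.le]
      have e6 : 2 * (4 / ((n:ℝ)-1) ^ 2) ^ 2 * T n ≤ 4096 * K ^ 2 / ((n:ℝ)-1) :=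
        e1.trans (e3.trans_eq e4)
      calc 2 * (4 / ((n:ℝ)-1) ^ 2) ^ 2 * T n + 2 * (2 * m / ((n:ℝ)-1)) ^ 2
          ≤ 4096 * K ^ 2 / ((n:ℝ)-1) + 8 * m ^ 2 / ((n:ℝ)-1) := add_le_add e6 e5
        _ = C / ((n:ℝ)-1) := by rw [hCdef]; ring
    have h2 : C / ((n:ℝ)-1) ≤ 2 * C / n := by
      rw [div_le_div_iff₀ hx0 hn0]
      nlinarith [mul_nonneg hC0 (by linarith : (0:ℝ) ≤ (n:ℝ) - 2)]
    have heq : 2 * C / ε ^ 2 / (n : ℝ) = (2 * C / n) / ε ^ 2 := by ring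
    rw [heq]
    gcongr
    exact h1.trans h2
  -- conclusion by squeezing
  have hu : Tendsto (fun n : ℕ => ENNReal.ofReal ((2 * C / ε ^ 2) / n)) atTop (nhds 0) := by
    have h0 : Tendsto (fun n : ℕ => (2 * C / ε ^ 2) / (n : ℝ)) atTop (nhds 0) :=
      tendsto_const_div_atTop_nhds_zero_nat _
    have h1 := (ENNReal.continuous_ofReal.tendsto 0).comp h0
    rw [ENNReal.ofReal_zero] at h1
    exact h1
  refine tendsto_of_tendsto_of_tendsto_of_le_of_le' tendsto_const_nhds hu
    (Eventually.of_forall fun n => zero_le) ?_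
  filter_upwards [eventually_ge_atTop 2] with n hn
  exact (hmark n).trans (ENNReal.ofReal_le_ofReal (hbound n hn))
end

section
/- Let 𝒳 and 𝒴 be measurable spaces, γ : 𝒳 × 𝒳 → ℝ and ℓ : 𝒴 × 𝒴 → ℝ bounded measurable kernels, and U_x, U_y probability measures on 𝒳 and 𝒴 respectively. For w = (x_1, x_2, y_1, y_2) ∈ 𝒳² × 𝒴² define h_HSIC(w, w') = (1/4) · h^γ((x_1,x_2),(x_1',x_2')) · h^ℓ((y_1,y_2),(y_1',y_2')), where for a kernel κ, h^κ((a,b),(a',b')) = κ(a,a') + κ(b,b') − κ(a,b') − κ(b,a'). Then for every w ∈ 𝒳² × 𝒴², ∫ h_HSIC(w, w') d(U_x ⊗ U_x ⊗ U_y ⊗ U_y)(w') = 0. In particular, under the null hypothesis of independence (where each quadruple w_i = (x_i, x_{i+n}, y_i, y_{i+n}) has law U_x ⊗ U_x ⊗ U_y ⊗ U_y), the core function h_HSIC of the HSIC U-statistic is first-order degenerate. -/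
/-!
The integrand factors as `h^γ(w₁, w₁') · h^ℓ(w₂, w₂')` with `w₁'` and `w₂'` independent under the
product measure, so the integral is the product of the two factor integrals. The `γ`-factor already
vanishes: rearranged, `h^γ((a,b), (x,x'))` is `f x - f x'` with `f = γ a - γ b`, and the two
coordinates of `Ux ⊗ Ux` have the same law.
-/

open MeasureTheory

theorem integral_fst_sub_snd_prod_self_eq_zero {α E : Type*} [NormedAddCommGroup E]
    [NormedSpace ℝ E] [MeasurableSpace α] (μ : Measure α) [IsFiniteMeasure μ] {f : α → E}
    (hf : Integrable f μ) :
    ∫ p, (f p.1 - f p.2) ∂μ.prod μ = 0 := by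
  rw [integral_sub (hf.comp_fst μ) (hf.comp_snd μ), integral_fun_fst, integral_fun_snd, sub_self]

def mmdCore {α : Type*} (κ : α → α → ℝ) (p q : α × α) : ℝ :=
  κ p.1 q.1 + κ p.2 q.2 - κ p.1 q.2 - κ p.2 q.1

theorem mmdCore_eq_sub {α : Type*} (κ : α → α → ℝ) (p q : α × α) :
    mmdCore κ p q = (κ p.1 - κ p.2) q.1 - (κ p.1 - κ p.2) q.2 := by
  simp only [mmdCore, Pi.sub_apply]
  ring

theorem integral_mmdCore_prod_self_eq_zero {α : Type*} [MeasurableSpace α] {κ : α → α → ℝ}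
    (μ : Measure α) [IsFiniteMeasure μ] (hκ : ∀ a, Integrable (κ a) μ) (p : α × α) :
    ∫ q, mmdCore κ p q ∂μ.prod μ = 0 := by
  simp_rw [mmdCore_eq_sub]
  exact integral_fst_sub_snd_prod_self_eq_zero μ ((hκ p.1).sub (hκ p.2))

theorem hHSIC_first_order_degenerate_general
    {𝒳 𝒴 : Type*} [MeasurableSpace 𝒳] [MeasurableSpace 𝒴]
    (γ : 𝒳 → 𝒳 → ℝ) (ℓ : 𝒴 → 𝒴 → ℝ)
    (hγmeas : Measurable (Function.uncurry γ))
    (Mγ : ℝ) (hγbd : ∀ a b, |γ a b| ≤ Mγ)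
    (Ux : Measure 𝒳) [IsProbabilityMeasure Ux]
    (Uy : Measure 𝒴) [IsProbabilityMeasure Uy] :
    ∀ w : (𝒳 × 𝒳) × (𝒴 × 𝒴),
      (∫ w' : (𝒳 × 𝒳) × (𝒴 × 𝒴),
          (1 / 4 : ℝ) *
            ((γ w.1.1 w'.1.1 + γ w.1.2 w'.1.2 - γ w.1.1 w'.1.2 - γ w.1.2 w'.1.1) *
              (ℓ w.2.1 w'.2.1 + ℓ w.2.2 w'.2.2 - ℓ w.2.1 w'.2.2 - ℓ w.2.2 w'.2.1))
          ∂((Ux.prod Ux).prod (Uy.prod Uy))) = 0 := by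
  intro w
  have hγint : ∀ a, Integrable (γ a) Ux := fun a =>
    .of_bound hγmeas.of_uncurry_left.aestronglyMeasurable Mγ (.of_forall (hγbd a))
  change ∫ w' : (𝒳 × 𝒳) × (𝒴 × 𝒴), 1 / 4 * (mmdCore γ w.1 w'.1 * mmdCore ℓ w.2 w'.2) ∂_ = 0
  rw [integral_const_mul, integral_prod_mul, integral_mmdCore_prod_self_eq_zero Ux hγint,
    zero_mul, mul_zero]

/-- First-order degeneracy of the HSIC U-statistic core under independence: with
`h^κ((a,b),(a',b')) = κ(a,a') + κ(b,b') - κ(a,b') - κ(b,a')` and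
`h_HSIC(w,w') = (1/4) h^γ((x₁,x₂),(x₁',x₂')) h^ℓ((y₁,y₂),(y₁',y₂'))` for
`w = ((x₁,x₂),(y₁,y₂))`, the integral of `h_HSIC(w, ·)` against
`(U_x ⊗ U_x) ⊗ (U_y ⊗ U_y)` vanishes for every `w`. -/
theorem hHSIC_first_order_degenerate
    {𝒳 𝒴 : Type*} [MeasurableSpace 𝒳] [MeasurableSpace 𝒴]
    (γ : 𝒳 → 𝒳 → ℝ) (ℓ : 𝒴 → 𝒴 → ℝ)
    (hγmeas : Measurable (Function.uncurry γ))
    (hℓmeas : Measurable (Function.uncurry ℓ))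
    (Mγ Mℓ : ℝ) (hγbd : ∀ a b, |γ a b| ≤ Mγ) (hℓbd : ∀ a b, |ℓ a b| ≤ Mℓ)
    (Ux : Measure 𝒳) [IsProbabilityMeasure Ux]
    (Uy : Measure 𝒴) [IsProbabilityMeasure Uy] :
    ∀ w : (𝒳 × 𝒳) × (𝒴 × 𝒴),
      (∫ w' : (𝒳 × 𝒳) × (𝒴 × 𝒴),
          (1 / 4 : ℝ) *
            ((γ w.1.1 w'.1.1 + γ w.1.2 w'.1.2 - γ w.1.1 w'.1.2 - γ w.1.2 w'.1.1) *
              (ℓ w.2.1 w'.2.1 + ℓ w.2.2 w'.2.2 - ℓ w.2.1 w'.2.2 - ℓ w.2.2 w'.2.1))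
          ∂((Ux.prod Ux).prod (Uy.prod Uy))) = 0 :=
  hHSIC_first_order_degenerate_general γ ℓ hγmeas Mγ hγbd Ux Uy
end

section
/- Let c ≥ 1, let u ∈ ℝ^c be a nonzero vector, let Σ_0 be a symmetric positive definite c×c real matrix and Σ_1 a symmetric positive semidefinite c×c real matrix. Let (U_n)_{n ≥ 1} be ℝ^c-valued random vectors and (Σ̂_n)_{n ≥ 1} random symmetric positive definite c×c matrices on a common probability space such that: (i) for every a ∈ ℝ^c, the law of √n · aᵀ(U_n − u) converges weakly to the Gaussian law N(0, aᵀΣ_1 a); and (ii) each entry of Σ̂_n converges in probability to the corresponding entry of Σ_0. Define T_n = n² U_nᵀ Σ̂_n^{-1} U_n. Then the law of n^{-3/2} ( T_n − n² uᵀ Σ̂_n^{-1} u ) converges weakly to the Gaussian law N(0, σ²) with σ² = 4 uᵀ Σ_0^{-1} Σ_1 Σ_0^{-1} u. (This is the second claim of Theorem 3: under the alternative hypothesis, where (i) is the multivariate central limit theorem for non-degenerate U-statistics with u = U^𝒦(𝕎) and Σ_1 = Σ_{H_1}, the aggregated statistic T_n^𝒦 is asymptotically normal after centering and rescaling by n^{-3/2}.)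 -/
open MeasureTheory Filter ProbabilityTheory Matrix BoundedContinuousFunction
open scoped ENNReal NNReal

namespace AggAux

variable {Ω : Type*} [MeasurableSpace Ω] {μ : Measure Ω} [IsProbabilityMeasure μ]

/-- convergence in probability to 0 -/
def P0 (μ : Measure Ω) (X : ℕ → Ω → ℝ) : Prop :=
  ∀ ε > (0:ℝ), Tendsto (fun n => μ {ω | ε < |X n ω|}) atTop (nhds 0)

/-- tightness (uniform, eventually) -/
def Tight (μ : Measure Ω) (X : ℕ → Ω → ℝ) : Prop :=
  ∀ ε > (0:ℝ), ∃ M > (0:ℝ), ∀ᶠ n in atTop, μ {ω | M < |X n ω|} ≤ ENNReal.ofReal ε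

lemma exists_ofReal_le {ε : ℝ≥0∞} (hε : 0 < ε) : ∃ δ : ℝ, 0 < δ ∧ ENNReal.ofReal δ ≤ ε := by
  rcases eq_or_ne ε ⊤ with rfl | h
  · exact ⟨1, one_pos, le_top⟩
  · exact ⟨ε.toReal, ENNReal.toReal_pos hε.ne' h, by rw [ENNReal.ofReal_toReal h]⟩

lemma tendsto_zero_of_le {f g : ℕ → ℝ≥0∞} (h : ∀ᶠ n in atTop, f n ≤ g n)
    (hg : Tendsto g atTop (nhds 0)) : Tendsto f atTop (nhds 0) := by
  rw [ENNReal.tendsto_nhds_zero] at *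
  intro ε hε
  filter_upwards [h, hg ε hε] with n h1 h2 using h1.trans h2

lemma tendsto_zero_add {f g : ℕ → ℝ≥0∞} (hf : Tendsto f atTop (nhds 0))
    (hg : Tendsto g atTop (nhds 0)) : Tendsto (fun n => f n + g n) atTop (nhds 0) := by
  rw [ENNReal.tendsto_nhds_zero] at *
  intro ε hε
  filter_upwards [hf (ε/2) (ENNReal.half_pos hε.ne'), hg (ε/2) (ENNReal.half_pos hε.ne')]
    with n h1 h2
  exact (add_le_add h1 h2).trans_eq (ENNReal.add_halves ε)

lemma P0.congr {X Y : ℕ → Ω → ℝ} (h : ∀ᶠ n in atTop, ∀ ω, X n ω = Y n ω)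
    (hX : P0 μ X) : P0 μ Y := by
  intro ε hε
  refine (hX ε hε).congr' ?_
  filter_upwards [h] with n hn
  congr 1
  ext ω
  simp only [Set.mem_setOf_eq, hn ω]

lemma P0.add {X Y : ℕ → Ω → ℝ} (hX : P0 μ X) (hY : P0 μ Y) :
    P0 μ (fun n ω => X n ω + Y n ω) := by
  intro ε hε
  have hs : ∀ n, {ω | ε < |X n ω + Y n ω|} ⊆ {ω | ε/2 < |X n ω|} ∪ {ω | ε/2 < |Y n ω|} := by
    intro n ω hω
    by_contra hc
    simp only [Set.mem_union, Set.mem_setOf_eq, not_or, not_lt] at hc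
    have : |X n ω + Y n ω| ≤ ε := by
      calc |X n ω + Y n ω| ≤ |X n ω| + |Y n ω| := abs_add_le _ _
        _ ≤ ε/2 + ε/2 := add_le_add hc.1 hc.2
        _ = ε := by ring
    exact absurd hω this.not_gt
  refine tendsto_zero_of_le (Eventually.of_forall fun n =>
    (measure_mono (hs n)).trans (measure_union_le _ _)) ?_
  exact tendsto_zero_add (hX (ε/2) (by positivity)) (hY (ε/2) (by positivity))

lemma P0.zero : P0 μ (fun _ _ => (0:ℝ)) := by
  intro ε hε
  have hset : {ω : Ω | ε < |(0:ℝ)|} = ∅ := by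
    ext ω
    simp [abs_zero, (lt_asymm hε : ¬ ε < 0)]
  simp only [hset, measure_empty]
  exact tendsto_const_nhds

lemma P0.sum {ι : Type*} (s : Finset ι) (X : ι → ℕ → Ω → ℝ)
    (h : ∀ i ∈ s, P0 μ (X i)) : P0 μ (fun n ω => ∑ i ∈ s, X i n ω) := by
  classical
  induction s using Finset.cons_induction with
  | empty => simpa using (P0.zero (μ := μ))
  | cons a s ha ih =>
      simp only [Finset.sum_cons]
      exact (h a (Finset.mem_cons_self a s)).add
        (ih fun i hi => h i (Finset.mem_cons_of_mem hi))

lemma Tight.mul_P0 {X Y : ℕ → Ω → ℝ} (hX : Tight μ X) (hY : P0 μ Y) :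
    P0 μ (fun n ω => X n ω * Y n ω) := by
  intro ε hε
  rw [ENNReal.tendsto_nhds_zero]
  intro ε' hε'
  obtain ⟨δ, hδ, hδε'⟩ := exists_ofReal_le hε'
  obtain ⟨M, hM, hMev⟩ := hX (δ/2) (by positivity)
  have h2 := (ENNReal.tendsto_nhds_zero.mp (hY (ε/M) (by positivity)))
    (ENNReal.ofReal (δ/2)) (by simp [ENNReal.ofReal_pos]; positivity)
  filter_upwards [hMev, h2] with n h1 h2
  have hsub : {ω | ε < |X n ω * Y n ω|} ⊆ {ω | M < |X n ω|} ∪ {ω | ε/M < |Y n ω|} := by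
    intro ω hω
    by_contra hc
    simp only [Set.mem_union, Set.mem_setOf_eq, not_or, not_lt] at hc
    have : |X n ω * Y n ω| ≤ ε := by
      rw [abs_mul]
      calc |X n ω| * |Y n ω| ≤ M * (ε/M) :=
            mul_le_mul hc.1 hc.2 (abs_nonneg _) hM.le
        _ = ε := by field_simp
    exact absurd hω this.not_gt
  calc μ {ω | ε < |X n ω * Y n ω|} ≤ μ ({ω | M < |X n ω|} ∪ {ω | ε/M < |Y n ω|}) :=
        measure_mono hsub
    _ ≤ μ {ω | M < |X n ω|} + μ {ω | ε/M < |Y n ω|} := measure_union_le _ _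
    _ ≤ ENNReal.ofReal (δ/2) + ENNReal.ofReal (δ/2) := add_le_add h1 h2
    _ = ENNReal.ofReal δ := by rw [← ENNReal.ofReal_add (by positivity) (by positivity)]; ring_nf
    _ ≤ ε' := hδε'

lemma Tight.const_mul {X : ℕ → Ω → ℝ} (hX : Tight μ X) {c : ℕ → ℝ}
    (hc : Tendsto c atTop (nhds 0)) : P0 μ (fun n ω => c n * X n ω) := by
  intro ε hε
  rw [ENNReal.tendsto_nhds_zero]
  intro ε' hε'
  obtain ⟨δ, hδ, hδε'⟩ := exists_ofReal_le hε'
  obtain ⟨M, hM, hMev⟩ := hX δ hδ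
  have hcev : ∀ᶠ n in atTop, |c n| < ε/M := by
    have := Metric.tendsto_nhds.mp hc (ε/M) (by positivity)
    simpa [Real.dist_eq] using this
  filter_upwards [hMev, hcev] with n h1 h2
  refine le_trans (measure_mono ?_) (h1.trans hδε')
  intro ω hω
  simp only [Set.mem_setOf_eq] at *
  by_contra hMx
  push_neg at hMx
  have : |c n * X n ω| < ε := by
    rw [abs_mul]
    calc |c n| * |X n ω| ≤ |c n| * M := by
          exact mul_le_mul_of_nonneg_left hMx (abs_nonneg _)
      _ < (ε/M) * M := by exact mul_lt_mul_of_pos_right h2 hM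
      _ = ε := by field_simp
  exact absurd hω this.asymm

lemma P0.comp {ι : Type*} [Fintype ι] (X : ℕ → Ω → ι → ℝ) (x : ι → ℝ)
    (hX : ∀ i, P0 μ (fun n ω => X n ω i - x i)) (G : (ι → ℝ) → ℝ)
    (hG : ContinuousAt G x) : P0 μ (fun n ω => G (X n ω) - G x) := by
  classical
  intro ε hε
  obtain ⟨δ, hδ, hδG⟩ := Metric.continuousAt_iff.mp hG ε hε
  have hsub : ∀ n, {ω | ε < |G (X n ω) - G x|} ⊆
      ⋃ i : ι, {ω | δ/2 < |X n ω i - x i|} := by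
    intro n ω hω
    by_contra hc
    simp only [Set.mem_iUnion, Set.mem_setOf_eq, not_exists, not_lt] at hc
    have hdist : dist (X n ω) x < δ := by
      rcases isEmpty_or_nonempty ι with hι | hι
      · simpa [dist_pi_lt_iff hδ] using fun i => (IsEmpty.elim hι i)
      · rw [dist_pi_lt_iff hδ]
        intro i
        rw [Real.dist_eq]
        exact lt_of_le_of_lt (hc i) (by linarith)
    have := hδG hdist
    rw [Real.dist_eq] at this
    exact this.asymm hω
  refine tendsto_zero_of_le (Eventually.of_forall fun n =>
    (measure_mono (hsub n)).trans (measure_iUnion_le _)) ?_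
  have : Tendsto (fun n => ∑' i : ι, μ {ω | δ/2 < |X n ω i - x i|}) atTop (nhds 0) := by
    have hfin : ∀ n, ∑' i : ι, μ {ω | δ/2 < |X n ω i - x i|}
        = ∑ i : ι, μ {ω | δ/2 < |X n ω i - x i|} := fun n => tsum_fintype _
    simp only [hfin]
    have h0 : (0:ℝ≥0∞) = ∑ _i : ι, 0 := by simp
    rw [h0]
    exact tendsto_finset_sum _ (fun i _ => hX i (δ/2) (by positivity))
  exact this

lemma integrable_comp (f : ℝ →ᵇ ℝ) {X : Ω → ℝ} (hX : Measurable X) :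
    Integrable (fun ω => f (X ω)) μ :=
  (integrable_const ‖f‖).mono' ((f.continuous.measurable.comp hX).aestronglyMeasurable)
    (ae_of_all _ fun _ => f.norm_coe_le_norm _)

lemma tight_of_clt {X : ℕ → Ω → ℝ} (hXm : ∀ n, Measurable (X n)) (ν : Measure ℝ)
    [IsProbabilityMeasure ν]
    (h : ∀ f : ℝ →ᵇ ℝ, Tendsto (fun n => ∫ ω, f (X n ω) ∂μ) atTop (nhds (∫ x, f x ∂ν))) :
    Tight μ X := by
  intro ε hε
  -- choose k with ν {y | k ≤ |y|} small
  have htail : Tendsto (fun k : ℕ => ν {y : ℝ | (k:ℝ) ≤ |y|}) atTop (nhds 0) := by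
    have hmeas : ∀ k : ℕ, MeasurableSet {y : ℝ | (k:ℝ) ≤ |y|} := fun k =>
      measurableSet_le measurable_const measurable_abs
    have hanti : Antitone (fun k : ℕ => {y : ℝ | (k:ℝ) ≤ |y|}) := by
      intro k m hkm y hy
      exact le_trans (show ((k:ℕ):ℝ) ≤ ((m:ℕ):ℝ) from Nat.cast_le.mpr hkm) hy
    have hempty : (⋂ k : ℕ, {y : ℝ | (k:ℝ) ≤ |y|}) = ∅ := by
      ext y
      simp only [Set.mem_iInter, Set.mem_setOf_eq, Set.mem_empty_iff_false, iff_false, not_forall,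
        not_le]
      obtain ⟨k, hk⟩ := exists_nat_gt |y|
      exact ⟨k, hk⟩
    have := MeasureTheory.tendsto_measure_iInter_atTop
      (fun k => (hmeas k).nullMeasurableSet) hanti ⟨0, measure_ne_top ν _⟩
    rw [hempty] at this
    simpa [Function.comp_def] using this
  obtain ⟨k, hk⟩ := (ENNReal.tendsto_nhds_zero.mp htail (ENNReal.ofReal (ε/4))
    (by simp [ENNReal.ofReal_pos]; positivity)).exists
  -- bump function
  set gfun : ℝ → ℝ := fun x => min 1 (max 0 (|x| - k)) with hgfun
  have hgcont : Continuous gfun :=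
    continuous_const.min (continuous_const.max (continuous_abs.sub continuous_const))
  have hgnonneg : ∀ x, 0 ≤ gfun x := fun x => le_min zero_le_one (le_max_left _ _)
  have hgle1 : ∀ x, gfun x ≤ 1 := fun x => min_le_left _ _
  have hgbd : ∀ x, ‖gfun x‖ ≤ 1 := fun x => by
    rw [Real.norm_eq_abs, abs_le]
    exact ⟨by linarith [hgnonneg x], hgle1 x⟩
  set g : ℝ →ᵇ ℝ := BoundedContinuousFunction.ofNormedAddCommGroup gfun hgcont 1 hgbd with hg
  have hgcoe : ∀ x, g x = gfun x := fun x => rfl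
  have hgone : ∀ x : ℝ, (k:ℝ) + 1 < |x| → gfun x = 1 := by
    intro x hx
    have : (1:ℝ) ≤ max 0 (|x| - k) := le_max_of_le_right (by linarith)
    simp [hgfun, min_eq_left this]
  have hgind : ∀ x : ℝ, gfun x ≤ Set.indicator {y : ℝ | (k:ℝ) ≤ |y|} (fun _ => 1) x := by
    intro x
    by_cases hx : (k:ℝ) ≤ |x|
    · rw [Set.indicator_of_mem (show x ∈ {y : ℝ | (k:ℝ) ≤ |y|} from hx)]
      exact hgle1 x
    · rw [Set.indicator_of_notMem (show x ∉ {y : ℝ | (k:ℝ) ≤ |y|} from hx)]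
      push_neg at hx
      have : max 0 (|x| - (k:ℝ)) = 0 := max_eq_left (by linarith)
      simp [hgfun, this]
  -- ∫ g dν ≤ ε/4
  have hSmeas : MeasurableSet {y : ℝ | (k:ℝ) ≤ |y|} :=
    measurableSet_le measurable_const measurable_abs
  have hνint : ∫ x, g x ∂ν ≤ ε/4 := by
    have h1 : ∫ x, g x ∂ν ≤ ∫ x, Set.indicator {y : ℝ | (k:ℝ) ≤ |y|} (fun _ => (1:ℝ)) x ∂ν := by
      refine integral_mono (integrable_comp g measurable_id) ?_ hgind
      exact (integrable_const 1).indicator hSmeas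
    rw [integral_indicator_const _ hSmeas] at h1
    simp only [smul_eq_mul, mul_one] at h1
    refine h1.trans ?_
    exact ENNReal.toReal_le_of_le_ofReal (by positivity) hk
  -- eventually μ {ω | k+1 < |X n ω|} ≤ ofReal ε
  refine ⟨(k:ℝ) + 1, by positivity, ?_⟩
  have hev : ∀ᶠ n in atTop, ∫ ω, g (X n ω) ∂μ < ∫ x, g x ∂ν + ε/4 :=
    (h g).eventually_lt_const (by linarith)
  filter_upwards [hev] with n hn
  have hA : MeasurableSet {ω | (k:ℝ) + 1 < |X n ω|} :=
    measurableSet_lt measurable_const (hXm n).abs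
  have hind : ∀ ω, Set.indicator {ω | (k:ℝ) + 1 < |X n ω|} (fun _ => (1:ℝ)) ω ≤ g (X n ω) := by
    intro ω
    by_cases hω : (k:ℝ) + 1 < |X n ω|
    · rw [Set.indicator_of_mem (show ω ∈ {ω | (k:ℝ) + 1 < |X n ω|} from hω)]
      rw [hgcoe, hgone _ hω]
    · rw [Set.indicator_of_notMem (show ω ∉ {ω | (k:ℝ) + 1 < |X n ω|} from hω)]
      exact hgnonneg _
  have h2 : (μ {ω | (k:ℝ) + 1 < |X n ω|}).toReal ≤ ∫ ω, g (X n ω) ∂μ := by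
    have := integral_mono ((integrable_const (1:ℝ)).indicator hA) (integrable_comp (μ:=μ) g (hXm n)) hind
    rwa [integral_indicator_const _ hA, smul_eq_mul, mul_one] at this
  have h3 : (μ {ω | (k:ℝ) + 1 < |X n ω|}).toReal ≤ ε := by
    calc (μ {ω | (k:ℝ) + 1 < |X n ω|}).toReal ≤ ∫ ω, g (X n ω) ∂μ := h2
      _ ≤ ∫ x, g x ∂ν + ε/4 := hn.le
      _ ≤ ε/4 + ε/4 := by linarith
      _ ≤ ε := by linarith
  calc μ {ω | (k:ℝ) + 1 < |X n ω|}
      = ENNReal.ofReal ((μ {ω | (k:ℝ) + 1 < |X n ω|}).toReal) :=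
        (ENNReal.ofReal_toReal (measure_ne_top μ _)).symm
    _ ≤ ENNReal.ofReal ε := ENNReal.ofReal_le_ofReal h3

lemma slutsky {X Y : ℕ → Ω → ℝ} (hXm : ∀ n, Measurable (X n)) (hYm : ∀ n, Measurable (Y n))
    (ν : Measure ℝ) [IsProbabilityMeasure ν]
    (hX : ∀ f : ℝ →ᵇ ℝ, Tendsto (fun n => ∫ ω, f (X n ω) ∂μ) atTop (nhds (∫ x, f x ∂ν)))
    (hY : P0 μ Y) (f : ℝ →ᵇ ℝ) :
    Tendsto (fun n => ∫ ω, f (X n ω + Y n ω) ∂μ) atTop (nhds (∫ x, f x ∂ν)) := by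
  have hT : Tight μ X := tight_of_clt hXm ν hX
  set C := ‖f‖ with hC
  have hCnn : 0 ≤ C := norm_nonneg f
  -- the difference of integrals tends to 0
  have hd : Tendsto (fun n => ∫ ω, f (X n ω + Y n ω) ∂μ - ∫ ω, f (X n ω) ∂μ) atTop (nhds 0) := by
    rw [Metric.tendsto_atTop]
    intro ε₀ hε₀
    set ε := ε₀ / 2 with hεdef
    have hε : 0 < ε := by positivity
    -- tail control
    set η := ε / (8 * (C + 1)) with hη
    have hηpos : 0 < η := by positivity
    obtain ⟨M, hM, hMev⟩ := hT η hηpos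
    -- uniform continuity on a compact interval
    have hK : IsCompact (Set.Icc (-(M+2)) (M+2)) := isCompact_Icc
    have hUC : UniformContinuousOn f (Set.Icc (-(M+2)) (M+2)) :=
      hK.uniformContinuousOn_of_continuous f.continuous.continuousOn
    obtain ⟨δ0, hδ0, hδ0f⟩ := Metric.uniformContinuousOn_iff.mp hUC (ε/2) (by positivity)
    set δ := min δ0 1 / 2 with hδdef
    have hδpos : 0 < δ := by positivity
    have hδle1 : δ ≤ 1 := by
      have : min δ0 1 ≤ 1 := min_le_right _ _
      linarith
    have hδltδ0 : δ < δ0 := by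
      have : min δ0 1 ≤ δ0 := min_le_left _ _
      linarith
    have hYev := (ENNReal.tendsto_nhds_zero.mp (hY δ hδpos)) (ENNReal.ofReal η)
      (by simp [ENNReal.ofReal_pos]; positivity)
    have key : ∀ᶠ n in atTop, |∫ ω, f (X n ω + Y n ω) ∂μ - ∫ ω, f (X n ω) ∂μ| ≤ ε := by
      filter_upwards [hMev, hYev] with n h1 h2
      set A := {ω | M < |X n ω|} ∪ {ω | δ < |Y n ω|} with hA
      have hAmeas : MeasurableSet A :=
        (measurableSet_lt measurable_const (hXm n).abs).union
          (measurableSet_lt measurable_const (hYm n).abs)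
      have hμA : μ A ≤ ENNReal.ofReal (2*η) := by
        calc μ A ≤ μ {ω | M < |X n ω|} + μ {ω | δ < |Y n ω|} := measure_union_le _ _
          _ ≤ ENNReal.ofReal η + ENNReal.ofReal η := add_le_add h1 h2
          _ = ENNReal.ofReal (2*η) := by
              rw [← ENNReal.ofReal_add hηpos.le hηpos.le]; ring_nf
      have hμAreal : (μ A).toReal ≤ 2*η :=
        ENNReal.toReal_le_of_le_ofReal (by positivity) hμA
      -- pointwise bound
      have hpt : ∀ ω, |f (X n ω + Y n ω) - f (X n ω)| ≤
          ε/2 + Set.indicator A (fun _ => 2*C) ω := by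
        intro ω
        by_cases hω : ω ∈ A
        · rw [Set.indicator_of_mem hω]
          have : |f (X n ω + Y n ω) - f (X n ω)| ≤ 2*C := by
            calc |f (X n ω + Y n ω) - f (X n ω)|
                ≤ |f (X n ω + Y n ω)| + |f (X n ω)| := abs_sub _ _
              _ ≤ C + C := add_le_add (f.norm_coe_le_norm _) (f.norm_coe_le_norm _)
              _ = 2*C := by ring
          linarith
        · rw [Set.indicator_of_notMem hω]
          simp only [hA, Set.mem_union, Set.mem_setOf_eq, not_or, not_lt] at hω
          obtain ⟨hX1, hY1⟩ := hω
          obtain ⟨hX1a, hX1b⟩ := abs_le.mp hX1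
          obtain ⟨hY1a, hY1b⟩ := abs_le.mp hY1
          have hmem1 : X n ω ∈ Set.Icc (-(M+2)) (M+2) := by
            rw [Set.mem_Icc]; constructor <;> linarith
          have hmem2 : X n ω + Y n ω ∈ Set.Icc (-(M+2)) (M+2) := by
            rw [Set.mem_Icc]; constructor <;> linarith
          have hdist : dist (X n ω + Y n ω) (X n ω) < δ0 := by
            rw [Real.dist_eq, add_sub_cancel_left]
            exact lt_of_le_of_lt hY1 hδltδ0
          have := hδ0f _ hmem2 _ hmem1 hdist
          rw [Real.dist_eq] at this
          linarith
      -- integrate the pointwise bound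
      have hint1 : Integrable (fun ω => f (X n ω + Y n ω)) μ :=
        integrable_comp f ((hXm n).add (hYm n))
      have hint2 : Integrable (fun ω => f (X n ω)) μ := integrable_comp f (hXm n)
      have hdiffint : Integrable (fun ω => |f (X n ω + Y n ω) - f (X n ω)|) μ :=
        (hint1.sub hint2).abs
      have hrhsint : Integrable (fun ω => ε/2 + Set.indicator A (fun _ => 2*C) ω) μ :=
        (integrable_const _).add ((integrable_const _).indicator hAmeas)
      have h5 : ∫ ω, |f (X n ω + Y n ω) - f (X n ω)| ∂μ ≤ ε/2 + (μ A).toReal * (2*C) := by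
        have hmono := integral_mono hdiffint hrhsint hpt
        rwa [integral_add (integrable_const _) ((integrable_const _).indicator hAmeas),
          integral_const, integral_indicator_const _ hAmeas, probReal_univ,
          one_smul, smul_eq_mul] at hmono
      have h6 : |∫ ω, f (X n ω + Y n ω) ∂μ - ∫ ω, f (X n ω) ∂μ| ≤
          ∫ ω, |f (X n ω + Y n ω) - f (X n ω)| ∂μ := by
        rw [← integral_sub hint1 hint2]
        simpa [Real.norm_eq_abs] using
          norm_integral_le_integral_norm (μ := μ) (fun ω => f (X n ω + Y n ω) - f (X n ω))
      have hηeq : 4*(C+1)*η = ε/2 := by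
        rw [hη]; field_simp; ring
      have h7 : (μ A).toReal * (2*C) ≤ ε/2 := by
        have h8 : (μ A).toReal * (2*C) ≤ (2*η) * (2*C) :=
          mul_le_mul_of_nonneg_right hμAreal (by positivity)
        nlinarith [hηpos.le]
      linarith
    obtain ⟨N, hN⟩ := eventually_atTop.mp key
    refine ⟨N, fun n hn => ?_⟩
    rw [Real.dist_eq, sub_zero]
    exact lt_of_le_of_lt (hN n hn) (by rw [hεdef]; linarith)
  have := (hX f).add hd
  rw [add_zero] at this
  refine this.congr fun n => ?_
  ring

lemma measurable_det {c : ℕ} {M : Ω → Matrix (Fin c) (Fin c) ℝ}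
    (h : ∀ i j, Measurable fun ω => M ω i j) : Measurable fun ω => (M ω).det := by
  simp only [Matrix.det_apply, Units.smul_def, zsmul_eq_mul]
  exact Finset.measurable_sum _ fun σ _ =>
    (Finset.measurable_prod _ fun i _ => h _ _).const_mul _

lemma measurable_inv_entry {c : ℕ} {M : Ω → Matrix (Fin c) (Fin c) ℝ}
    (h : ∀ i j, Measurable fun ω => M ω i j) (i j : Fin c) :
    Measurable fun ω => (M ω)⁻¹ i j := by
  simp only [Matrix.inv_def, Ring.inverse_eq_inv', Matrix.smul_apply, smul_eq_mul,
    Matrix.adjugate_apply]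
  refine Measurable.mul (measurable_det h).inv (measurable_det ?_)
  intro a b
  rcases eq_or_ne a j with rfl | hab
  · simpa [Matrix.updateRow_apply] using measurable_const
  · simpa [Matrix.updateRow_apply, hab] using h a b

end AggAux

/-- Asymptotic normality of the studentized aggregated statistic under the alternative
(second claim of Theorem 3): if `√n aᵀ(U_n − u) ⇝ N(0, aᵀΣ₁a)` for every `a`, and the
random matrices `Σ̂_n` converge entrywise in probability to the positive definite `Σ₀`,
then with `T_n = n² U_nᵀ Σ̂_n⁻¹ U_n`,
`n^{-3/2}(T_n − n² uᵀ Σ̂_n⁻¹ u) ⇝ N(0, 4 uᵀΣ₀⁻¹Σ₁Σ₀⁻¹u)`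
(weak convergence stated via bounded continuous test functions). -/
theorem aggregated_statistic_asymptotic_normality
    {Ω : Type*} [MeasurableSpace Ω] (μ : Measure Ω) [IsProbabilityMeasure μ]
    (c : ℕ) (hc : 1 ≤ c) (u : Fin c → ℝ) (hu : u ≠ 0)
    (S0 S1 : Matrix (Fin c) (Fin c) ℝ) (hS0 : S0.PosDef) (hS1 : S1.PosSemidef)
    (U : ℕ → Ω → Fin c → ℝ) (hUmeas : ∀ n, Measurable (U n))
    (Shat : ℕ → Ω → Matrix (Fin c) (Fin c) ℝ) (hShatmeas : ∀ n i j, Measurable fun ω => Shat n ω i j)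
    (hShatpd : ∀ n ω, (Shat n ω).PosDef)
    (hCLT : ∀ a : Fin c → ℝ, ∀ f : ℝ →ᵇ ℝ,
      Tendsto (fun n : ℕ => ∫ ω, f (Real.sqrt n * (a ⬝ᵥ (U n ω - u))) ∂μ)
        atTop (nhds (∫ x, f x ∂(gaussianReal 0 (Real.toNNReal (a ⬝ᵥ S1.mulVec a))))))
    (hSconv : ∀ i j : Fin c, ∀ ε > (0 : ℝ),
      Tendsto (fun n : ℕ => μ {ω | ε < |Shat n ω i j - S0 i j|}) atTop (nhds 0)) :
    ∀ f : ℝ →ᵇ ℝ,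
      Tendsto (fun n : ℕ => ∫ ω,
          f ((n : ℝ) ^ (-(3 : ℝ) / 2) *
            ((n : ℝ) ^ 2 * (U n ω ⬝ᵥ ((Shat n ω)⁻¹).mulVec (U n ω))
              - (n : ℝ) ^ 2 * (u ⬝ᵥ ((Shat n ω)⁻¹).mulVec u))) ∂μ)
        atTop
        (nhds (∫ x, f x ∂(gaussianReal 0
          (Real.toNNReal (4 * (u ⬝ᵥ (S0⁻¹ * S1 * S0⁻¹).mulVec u)))))) := by
  classical
  intro f
  -- the symmetric swap lemma
  have hsym : ∀ (B : Matrix (Fin c) (Fin c) ℝ), B.IsHermitian → ∀ v w : Fin c → ℝ,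
      v ⬝ᵥ B.mulVec w = w ⬝ᵥ B.mulVec v := by
    intro B hB v w
    have hBt : Bᵀ = B := by simpa using hB.eq
    have h2 := Matrix.vecMul_transpose B v
    rw [hBt] at h2
    calc v ⬝ᵥ B *ᵥ w = v ᵥ* B ⬝ᵥ w := Matrix.dotProduct_mulVec v B w
      _ = w ⬝ᵥ v ᵥ* B := dotProduct_comm _ _
      _ = w ⬝ᵥ B *ᵥ v := by rw [h2]
  have hS0herm : (S0⁻¹).IsHermitian := hS0.1.inv
  set a : Fin c → ℝ := fun i => 2 * (S0⁻¹.mulVec u) i with ha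
  set X : ℕ → Ω → ℝ := fun n ω => Real.sqrt n * (a ⬝ᵥ (U n ω - u)) with hXdef
  set R : ℕ → Ω → ℝ := fun n ω =>
    Real.sqrt n * ((U n ω - u) ⬝ᵥ ((Shat n ω)⁻¹.mulVec (U n ω + u) - a)) with hRdef
  -- measurability
  have hUi : ∀ n i, Measurable fun ω => U n ω i := fun n i =>
    (measurable_pi_apply i).comp (hUmeas n)
  have hBm : ∀ n i j, Measurable fun ω => (Shat n ω)⁻¹ i j := fun n i j =>
    AggAux.measurable_inv_entry (hShatmeas n) i j
  have hZmeas : ∀ (b : Fin c → ℝ) (n : ℕ),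
      Measurable fun ω => Real.sqrt n * (b ⬝ᵥ (U n ω - u)) := by
    intro b n
    apply Measurable.const_mul
    simp only [dotProduct, Pi.sub_apply]
    exact Finset.measurable_sum _ fun i _ => ((hUi n i).sub measurable_const).const_mul (b i)
  have hXm : ∀ n, Measurable (X n) := fun n => hZmeas a n
  have hRm : ∀ n, Measurable (R n) := by
    intro n
    apply Measurable.const_mul
    simp only [dotProduct, Matrix.mulVec, Pi.sub_apply, Pi.add_apply]
    refine Finset.measurable_sum _ fun i _ => ?_
    refine ((hUi n i).sub measurable_const).mul ?_
    refine Measurable.sub ?_ measurable_const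
    exact Finset.measurable_sum _ fun k _ =>
      (hBm n i k).mul ((hUi n k).add_const (u k))
  -- tightness
  have hTight : ∀ b : Fin c → ℝ, AggAux.Tight μ (fun n ω => Real.sqrt n * (b ⬝ᵥ (U n ω - u))) :=
    fun b => AggAux.tight_of_clt (hZmeas b) _ (hCLT b)
  -- coordinates converge in probability
  have hsqrtinv : Tendsto (fun n : ℕ => (Real.sqrt n)⁻¹) atTop (nhds 0) := by
    apply Tendsto.comp tendsto_inv_atTop_zero
    have h1 : Tendsto (fun x : ℝ => x ^ (1/2 : ℝ)) atTop atTop := tendsto_rpow_atTop (by norm_num)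
    have h2 : Tendsto (fun n : ℕ => (n : ℝ)) atTop atTop := tendsto_natCast_atTop_atTop
    refine (h1.comp h2).congr fun n => ?_
    simp [Real.sqrt_eq_rpow, Function.comp]
  have hUconv : ∀ i, AggAux.P0 μ (fun n ω => U n ω i - u i) := by
    intro i
    have h1 := (hTight (Pi.single i 1)).const_mul hsqrtinv
    refine AggAux.P0.congr ?_ h1
    filter_upwards [eventually_ge_atTop 1] with n hn
    intro ω
    have hs : Real.sqrt n ≠ 0 :=
      ne_of_gt (Real.sqrt_pos.mpr (by exact_mod_cast Nat.cast_pos.mpr hn))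
    rw [← mul_assoc, inv_mul_cancel₀ hs, one_mul]
    simp [single_dotProduct]
  -- the packaged convergence of (Shat, U)
  have hV : ∀ s : (Fin c × Fin c) ⊕ (Fin c), AggAux.P0 μ (fun n ω =>
      (Sum.elim (fun p : Fin c × Fin c => Shat n ω p.1 p.2) (fun i => U n ω i) s)
        - (Sum.elim (fun p : Fin c × Fin c => S0 p.1 p.2) u s)) := by
    rintro (⟨i, j⟩ | i)
    · exact hSconv i j
    · exact hUconv i
  -- continuity of the inverse map at S0
  have hdet : S0.det ≠ 0 := hS0.det_pos.ne'
  have hinvCA : ContinuousAt (fun A : Matrix (Fin c) (Fin c) ℝ => A⁻¹) S0 := by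
    have heq : (fun A : Matrix (Fin c) (Fin c) ℝ => A⁻¹)
        = fun A => Ring.inverse A.det • A.adjugate := funext fun A => Matrix.inv_def A
    rw [heq, Ring.inverse_eq_inv']
    exact ContinuousAt.smul
      ((continuousAt_inv₀ hdet).comp (continuous_id.matrix_det.continuousAt))
      (continuous_id.matrix_adjugate.continuousAt)
  -- the W coordinates converge in probability to 0
  have hW : ∀ j : Fin c, AggAux.P0 μ
      (fun n ω => ((Shat n ω)⁻¹.mulVec (U n ω + u)) j - a j) := by
    intro j
    set G : ((Fin c × Fin c) ⊕ (Fin c) → ℝ) → ℝ := fun y =>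
      ((Matrix.of fun i k => y (Sum.inl (i, k)))⁻¹.mulVec (fun k => y (Sum.inr k) + u k)) j
      with hGdef
    set v : (Fin c × Fin c) ⊕ (Fin c) → ℝ := Sum.elim (fun p : Fin c × Fin c => S0 p.1 p.2) u
      with hvdef
    have hmatv : (Matrix.of fun i k => v (Sum.inl (i, k))) = S0 := rfl
    have hGv : G v = a j := by
      have hvec : (fun k => v (Sum.inr k) + u k) = u + u := rfl
      rw [hGdef]
      simp only [hmatv, hvec]
      rw [Matrix.mulVec_add]
      simp [ha, Pi.add_apply, two_mul]
    have hGcont : ContinuousAt G v := by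
      have hmatcont : Continuous (fun y : (Fin c × Fin c) ⊕ (Fin c) → ℝ =>
          (Matrix.of fun i k => y (Sum.inl (i, k)) : Matrix (Fin c) (Fin c) ℝ)) :=
        continuous_matrix fun i k => continuous_apply _
      have hMA : ContinuousAt (fun y : (Fin c × Fin c) ⊕ (Fin c) → ℝ =>
          (Matrix.of fun i k => y (Sum.inl (i, k)) : Matrix (Fin c) (Fin c) ℝ)⁻¹) v := by
        have := hinvCA.comp hmatcont.continuousAt (x := v)
        simpa [hmatv, Function.comp_def] using this
      have hGeq : G = fun y => ∑ k,
          ((Matrix.of fun i k => y (Sum.inl (i, k)) : Matrix (Fin c) (Fin c) ℝ)⁻¹ j k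
            * (y (Sum.inr k) + u k)) := by
        funext y
        simp [hGdef, Matrix.mulVec, dotProduct]
      rw [hGeq]
      refine tendsto_finset_sum _ fun k _ => ContinuousAt.mul ?_ ?_
      · exact (((continuous_apply k).comp (continuous_apply j)).continuousAt).comp hMA
      · exact ((continuous_apply (Sum.inr k)).continuousAt).add continuousAt_const
    -- apply the continuous-mapping lemma
    have := AggAux.P0.comp (μ := μ)
      (fun n ω => Sum.elim (fun p : Fin c × Fin c => Shat n ω p.1 p.2) (fun i => U n ω i))
      v hV G hGcont
    rw [hGv] at this
    exact AggAux.P0.congr (Eventually.of_forall fun n => fun ω => rfl) this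
  -- R converges to 0 in probability
  have hRP0 : AggAux.P0 μ R := by
    have hsum : AggAux.P0 μ (fun n ω => ∑ j : Fin c,
        (Real.sqrt n * (U n ω j - u j)) * (((Shat n ω)⁻¹.mulVec (U n ω + u)) j - a j)) := by
      refine AggAux.P0.sum Finset.univ _ fun j _ => ?_
      have hZj : AggAux.Tight μ (fun n ω => Real.sqrt n * (U n ω j - u j)) := by
        have h1 := hTight (Pi.single j 1)
        have heq : (fun (n : ℕ) (ω : Ω) => Real.sqrt n * (Pi.single j (1:ℝ) ⬝ᵥ (U n ω - u)))
            = fun (n : ℕ) (ω : Ω) => Real.sqrt n * (U n ω j - u j) := by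
          funext n ω
          simp [single_dotProduct]
        rwa [heq] at h1
      exact hZj.mul_P0 (hW j)
    refine AggAux.P0.congr (Eventually.of_forall fun n => fun ω => ?_) hsum
    rw [hRdef]
    simp only [dotProduct, Pi.sub_apply, Finset.mul_sum]
    exact Finset.sum_congr rfl fun j _ => by ring
  -- variance identity
  have hvar : a ⬝ᵥ S1.mulVec a = 4 * (u ⬝ᵥ (S0⁻¹ * S1 * S0⁻¹).mulVec u) := by
    set b : Fin c → ℝ := S0⁻¹.mulVec u with hb
    have hab2 : a = (2:ℝ) • b := by
      funext i
      simp [ha, hb, Pi.smul_apply, smul_eq_mul]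
    have h1 : a ⬝ᵥ S1.mulVec a = 4 * (b ⬝ᵥ S1.mulVec b) := by
      rw [hab2, smul_dotProduct, Matrix.mulVec_smul, dotProduct_smul,
        smul_eq_mul, smul_eq_mul]
      ring
    have h2 : u ⬝ᵥ (S0⁻¹ * S1 * S0⁻¹).mulVec u = b ⬝ᵥ S1.mulVec b := by
      rw [← Matrix.mulVec_mulVec, ← Matrix.mulVec_mulVec]
      rw [hsym S0⁻¹ hS0herm u (S1.mulVec (S0⁻¹.mulVec u))]
      rw [dotProduct_comm]
    rw [h1, h2]
  -- pointwise decomposition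
  have hdecomp : ∀ (n : ℕ) (ω : Ω),
      (n : ℝ) ^ (-(3 : ℝ) / 2) *
        ((n : ℝ) ^ 2 * (U n ω ⬝ᵥ ((Shat n ω)⁻¹).mulVec (U n ω))
          - (n : ℝ) ^ 2 * (u ⬝ᵥ ((Shat n ω)⁻¹).mulVec u)) = X n ω + R n ω := by
    intro n ω
    have hherm : ((Shat n ω)⁻¹).IsHermitian := (hShatpd n ω).1.inv
    have hscal : (n : ℝ) ^ (-(3:ℝ)/2) * (n : ℝ) ^ 2 = Real.sqrt n := by
      rcases Nat.eq_zero_or_pos n with rfl | hn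
      · simp [Real.zero_rpow (by norm_num : (-(3:ℝ)/2) ≠ 0)]
      · have hpos : (0:ℝ) < n := Nat.cast_pos.mpr hn
        rw [Real.sqrt_eq_rpow, ← Real.rpow_natCast (n:ℝ) 2, ← Real.rpow_add hpos]
        norm_num
    have hmat : U n ω ⬝ᵥ ((Shat n ω)⁻¹).mulVec (U n ω) - u ⬝ᵥ ((Shat n ω)⁻¹).mulVec u
        = (U n ω - u) ⬝ᵥ ((Shat n ω)⁻¹).mulVec (U n ω + u) := by
      have hswap := hsym ((Shat n ω)⁻¹) hherm u (U n ω)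
      rw [sub_dotProduct, Matrix.mulVec_add, dotProduct_add,
        dotProduct_add, hswap]
      ring
    calc (n : ℝ) ^ (-(3 : ℝ) / 2) *
        ((n : ℝ) ^ 2 * (U n ω ⬝ᵥ ((Shat n ω)⁻¹).mulVec (U n ω))
          - (n : ℝ) ^ 2 * (u ⬝ᵥ ((Shat n ω)⁻¹).mulVec u))
        = ((n : ℝ) ^ (-(3:ℝ)/2) * (n : ℝ) ^ 2) *
            (U n ω ⬝ᵥ ((Shat n ω)⁻¹).mulVec (U n ω) - u ⬝ᵥ ((Shat n ω)⁻¹).mulVec u) := by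
          ring
      _ = Real.sqrt n * ((U n ω - u) ⬝ᵥ ((Shat n ω)⁻¹).mulVec (U n ω + u)) := by
          rw [hscal, hmat]
      _ = X n ω + R n ω := by
          simp only [hXdef, hRdef]
          rw [dotProduct_comm a (U n ω - u), dotProduct_sub]
          ring
  -- conclude via Slutsky
  have hfinal := AggAux.slutsky hXm hRm
    (gaussianReal 0 (Real.toNNReal (a ⬝ᵥ S1.mulVec a))) (hCLT a) hRP0 f
  rw [hvar] at hfinal
  refine hfinal.congr fun n => ?_
  refine integral_congr_ae (ae_of_all _ fun ω => ?_)
  simp only [hdecomp n ω]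
end
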